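/- Let φ be an Orlicz function taking only finite values, satisfying the Δ₂-condition at zero, and such that ∑_{n=n₁}^∞ φ(1/n) < ∞ for some n₁ ∈ ℕ. Then for every ε > 0 there exists δ > 0 such that for all x ∈ ces_φ with ‖x‖_φ ≥ ε one has ρ_φ(x) > δ. -/

import Mathlib

open scoped ENNReal
open Filter

/-- An Orlicz function: `φ : ℝ → [0,∞]` even, convex, left continuous on `ℝ₊`,
continuous at zero, with `φ 0 = 0` and `φ u → ∞` as `u → ∞`. -/
structure OrliczFunction where
  toFun : ℝ → ℝ≥0∞
  even' : ∀ u : ℝ, toFun (-u) = toFun u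
  convex' : ∀ u v t : ℝ, 0 ≤ t → t ≤ 1 →
    toFun (t * u + (1 - t) * v) ≤ ENNReal.ofReal t * toFun u + ENNReal.ofReal (1 - t) * toFun v
  map_zero' : toFun 0 = 0
  leftContinuous' : ∀ t : ℝ, 0 < t → Tendsto toFun (nhdsWithin t (Set.Iio t)) (nhds (toFun t))
  continuousAtZero' : Tendsto toFun (nhds 0) (nhds 0)
  tendsto_top' : Tendsto toFun atTop (nhds ⊤)

/-- The Cesàro mean `σx(n) = (1/n) ∑_{j=1}^n |x j|` (with `0`-based indexing). -/
noncomputable def cesaroMean (x : ℕ → ℝ) (n : ℕ) : ℝ :=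
  (∑ j ∈ Finset.range (n + 1), |x j|) / (n + 1)

/-- The modular `ρ_φ(x) = ∑_i φ(σx(i))`. -/
noncomputable def rho (φ : OrliczFunction) (x : ℕ → ℝ) : ℝ≥0∞ :=
  ∑' n : ℕ, φ.toFun (cesaroMean x n)

/-- The Cesàro–Orlicz sequence space `ces_φ`. -/
def cesOrlicz (φ : OrliczFunction) : Set (ℕ → ℝ) :=
  {x | ∃ lam : ℝ, 0 < lam ∧ rho φ (fun i => lam * x i) < ⊤}

/-- The Luxemburg norm `‖x‖_φ = inf {λ > 0 : ρ_φ(x/λ) ≤ 1}`. -/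
noncomputable def luxNorm (φ : OrliczFunction) (x : ℕ → ℝ) : ℝ :=
  sInf {lam : ℝ | 0 < lam ∧ rho φ (fun i => x i / lam) ≤ 1}

/-- The subspace `A_φ` of `ces_φ`. -/
def Aphi (φ : OrliczFunction) : Set (ℕ → ℝ) :=
  {x | x ∈ cesOrlicz φ ∧ ∀ k : ℝ, 0 < k → ∃ nk : ℕ,
    ∑' n : ℕ, φ.toFun ((k / ((nk + n + 1 : ℕ) : ℝ)) * ∑ i ∈ Finset.range (nk + n + 1), |x i|) < ⊤}

/-- `∃ n₁, ∑_{n=n₁}^∞ φ(1/n) < ∞`. -/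
def TailFinite (φ : OrliczFunction) : Prop :=
  ∃ n₁ : ℕ, ∑' n : ℕ, φ.toFun (((n₁ + n + 1 : ℕ) : ℝ)⁻¹) < ⊤

/-- The `Δ₂`-condition at zero. -/
def Delta2Zero (φ : OrliczFunction) : Prop :=
  ∃ K : ℝ, 0 < K ∧ ∃ a : ℝ, 0 < a ∧ 0 < φ.toFun a ∧
    ∀ u : ℝ, 0 ≤ u → u ≤ a → φ.toFun (2 * u) ≤ ENNReal.ofReal K * φ.toFun u

/-- `φ` takes only finite values. -/
def FiniteValued (φ : OrliczFunction) : Prop := ∀ u : ℝ, φ.toFun u ≠ ⊤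

/-!
Fix `ε > 0` and `m` with `2⁻ᵐ < ε`, and put `c = a / 2ᵐ`, where `Δ₂` holds on `[0, a]` with
constant `K`. Iterating `Δ₂` gives `φ(2ᵐ u) ≤ Kᵐ φ(u)` for `2ᵐ u ≤ a`, hence `φ(c) > 0`, and any
`0 < δ < min (φ(c), K⁻ᵐ)` works: if `ρ(x) ≤ δ`, every term `φ(σx(n))` is below `φ(c)`, so
`σx(n) < c`, and then `ρ(2ᵐ x) ≤ Kᵐ ρ(x) ≤ 1`, that is `‖x‖ ≤ 2⁻ᵐ < ε`.
-/

namespace OrliczFunction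

variable (φ : OrliczFunction)

theorem toFun_mono {u v : ℝ} (hu : 0 ≤ u) (huv : u ≤ v) : φ.toFun u ≤ φ.toFun v := by
  rcases (hu.trans huv).eq_or_lt with hv | hv
  · rw [le_antisymm (huv.trans hv.symm.le) hu, hv]
  · have ht1 : u / v ≤ 1 := (div_le_one hv).2 huv
    have h := φ.convex' v 0 (u / v) (div_nonneg hu hv.le) ht1
    rw [mul_zero, add_zero, div_mul_cancel₀ u hv.ne', φ.map_zero', mul_zero, add_zero] at h
    calc φ.toFun u ≤ ENNReal.ofReal (u / v) * φ.toFun v := h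
      _ ≤ 1 * φ.toFun v := by gcongr; exact ENNReal.ofReal_le_one.2 ht1
      _ = φ.toFun v := one_mul _

variable {φ} {K a : ℝ}
  (hΔ : ∀ u : ℝ, 0 ≤ u → u ≤ a → φ.toFun (2 * u) ≤ ENNReal.ofReal K * φ.toFun u)
include hΔ

theorem toFun_two_pow_mul_le (m : ℕ) {u : ℝ} (hu : 0 ≤ u) (hua : 2 ^ m * u ≤ a) :
    φ.toFun (2 ^ m * u) ≤ ENNReal.ofReal K ^ m * φ.toFun u := by
  induction m with
  | zero => simp
  | succ m ih =>
    have hm : 2 ^ m * u ≤ a := by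
      rw [pow_succ] at hua
      nlinarith [mul_nonneg (pow_nonneg zero_le_two m : (0 : ℝ) ≤ 2 ^ m) hu]
    calc φ.toFun (2 ^ (m + 1) * u) = φ.toFun (2 * (2 ^ m * u)) := by ring_nf
      _ ≤ ENNReal.ofReal K * φ.toFun (2 ^ m * u) := hΔ _ (by positivity) hm
      _ ≤ ENNReal.ofReal K * (ENNReal.ofReal K ^ m * φ.toFun u) := by gcongr; exact ih hm
      _ = ENNReal.ofReal K ^ (m + 1) * φ.toFun u := by ring

theorem toFun_div_two_pow_pos (ha : 0 ≤ a) (hpa : 0 < φ.toFun a) (m : ℕ) :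
    0 < φ.toFun (a / 2 ^ m) := by
  have hcancel : (2 : ℝ) ^ m * (a / 2 ^ m) = a := mul_div_cancel₀ a (by positivity)
  have h := toFun_two_pow_mul_le hΔ m (u := a / 2 ^ m) (by positivity) hcancel.le
  rw [hcancel] at h
  refine pos_iff_ne_zero.2 fun h0 => hpa.ne' (le_antisymm ?_ zero_le)
  simpa [h0] using h

end OrliczFunction

theorem cesaroMean_nonneg (x : ℕ → ℝ) (n : ℕ) : 0 ≤ cesaroMean x n := by
  unfold cesaroMean
  positivity

theorem cesaroMean_const_mul {c : ℝ} (hc : 0 ≤ c) (x : ℕ → ℝ) (n : ℕ) :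
    cesaroMean (fun i => c * x i) n = c * cesaroMean x n := by
  simp only [cesaroMean, abs_mul, abs_of_nonneg hc, ← Finset.mul_sum, mul_div_assoc]

section Modular

variable {φ : OrliczFunction} {x : ℕ → ℝ}

theorem cesaroMean_lt_of_rho_lt {c : ℝ} (hc : 0 ≤ c) (h : rho φ x < φ.toFun c) (n : ℕ) :
    cesaroMean x n < c := by
  by_contra! hn
  exact (h.trans_le (φ.toFun_mono hc hn)).not_ge (ENNReal.le_tsum n)

theorem luxNorm_le_of_rho_div_le_one {lam : ℝ} (hlam : 0 < lam)
    (h : rho φ (fun i => x i / lam) ≤ 1) : luxNorm φ x ≤ lam :=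
  csInf_le ⟨0, fun _ hy => hy.1.le⟩ ⟨hlam, h⟩

variable {K a : ℝ}
  (hΔ : ∀ u : ℝ, 0 ≤ u → u ≤ a → φ.toFun (2 * u) ≤ ENNReal.ofReal K * φ.toFun u)
include hΔ

theorem rho_two_pow_mul_le (m : ℕ) (hx : ∀ n, 2 ^ m * cesaroMean x n ≤ a) :
    rho φ (fun i => 2 ^ m * x i) ≤ ENNReal.ofReal K ^ m * rho φ x := by
  rw [rho, rho, ← ENNReal.tsum_mul_left]
  refine ENNReal.tsum_le_tsum fun n => ?_
  rw [cesaroMean_const_mul (by positivity)]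
  exact OrliczFunction.toFun_two_pow_mul_le hΔ m (cesaroMean_nonneg x n) (hx n)

theorem luxNorm_le_inv_two_pow (ha : 0 ≤ a) (m : ℕ) (hρc : rho φ x < φ.toFun (a / 2 ^ m))
    (hρK : ENNReal.ofReal K ^ m * rho φ x ≤ 1) : luxNorm φ x ≤ (2 ^ m)⁻¹ := by
  refine luxNorm_le_of_rho_div_le_one (by positivity) ?_
  simp only [div_inv_eq_mul, mul_comm (x _)]
  refine (rho_two_pow_mul_le hΔ m fun n => ?_).trans hρK
  calc 2 ^ m * cesaroMean x n ≤ 2 ^ m * (a / 2 ^ m) := by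
        gcongr; exact (cesaroMean_lt_of_rho_lt (by positivity) hρc n).le
    _ = a := mul_div_cancel₀ a (by positivity)

end Modular

theorem stmt_13_general (φ : OrliczFunction) (hδ : Delta2Zero φ) :
    ∀ ε : ℝ, 0 < ε → ∃ δ : ℝ, 0 < δ ∧ ∀ x ∈ cesOrlicz φ,
      ε ≤ luxNorm φ x → ENNReal.ofReal δ < rho φ x := by
  obtain ⟨K, -, a, ha, hpa, hΔ⟩ := hδ
  intro ε hε
  obtain ⟨m, hm⟩ : ∃ m : ℕ, (1 / 2 : ℝ) ^ m < ε := exists_pow_lt_of_lt_one hε (by norm_num)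
  have hbound : 0 < min (φ.toFun (a / 2 ^ m)) (ENNReal.ofReal K ^ m)⁻¹ :=
    lt_min (φ.toFun_div_two_pow_pos hΔ ha.le hpa m)
      (ENNReal.inv_pos.2 (ENNReal.pow_ne_top ENNReal.ofReal_ne_top))
  obtain ⟨δ, -, hδ0, hδ⟩ := ENNReal.lt_iff_exists_real_btwn.1 hbound
  refine ⟨δ, ENNReal.ofReal_pos.1 hδ0, fun x _ hεx => ?_⟩
  by_contra! hρ
  have hρK : ENNReal.ofReal K ^ m * rho φ x ≤ 1 := by
    rw [mul_comm, ← ENNReal.le_inv_iff_mul_le]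
    exact hρ.trans (hδ.trans_le (min_le_right _ _)).le
  have hlux := luxNorm_le_inv_two_pow hΔ ha.le m (hρ.trans_lt (hδ.trans_le (min_le_left _ _))) hρK
  rw [one_div_pow, one_div] at hm
  linarith

/-- if `φ ∈ Δ₂(0)` then for any `ε > 0` there is `δ > 0` with
`ρ_φ(x) > δ` whenever `‖x‖_φ ≥ ε`. -/
theorem stmt_13 (φ : OrliczFunction) (hfin : FiniteValued φ) (hδ : Delta2Zero φ)
    (htail : TailFinite φ) :
    ∀ ε : ℝ, 0 < ε → ∃ δ : ℝ, 0 < δ ∧ ∀ x ∈ cesOrlicz φ,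
      ε ≤ luxNorm φ x → ENNReal.ofReal δ < rho φ x :=
  stmt_13_general φ hδ
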